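/- arXiv:1301.4963 — 8 statements merged into one kernel-verified Lean document; each statement's English description precedes it below -/
import Mathlib

section
/- For every real c > 0 there is a constant C > 0 such that for all t ≥ 1, |(1/t) ∫₀ᵗ (⌊c√s⌋ + 1/2 − c√s) ds| ≤ C t^{−1/2}. -/
/-!
Writing `⌊x⌋ + 1/2 - x = 1/2 - {x}` and substituting `u = c√s`, the integral becomes
`(2/c²) Φ(c√t)` with `Φ(x) = ∫₀ˣ u (1/2 - {u}) du`. The sawtooth has mean zero, so `Φ` only
grows linearly, `|Φ(x)| ≤ x`, and dividing by `t` gives the bound `(2/c) t^{-1/2}`.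
-/

open Real Set

/-- `∫₀ᵘ v (1/2 - {v}) dv` in closed form: with `n = ⌊u⌋` and `f = {u}`, the last partial period
contributes `n f(1-f)/2 + f²/4 - f³/3` and each of the `n` full periods contributes `-1/12`. -/
noncomputable def weightedSawtoothPrimitive (u : ℝ) : ℝ :=
  ⌊u⌋ * (Int.fract u * (1 - Int.fract u)) / 2 + Int.fract u ^ 2 / 4 - Int.fract u ^ 3 / 3 - ⌊u⌋ / 12

local notation "Φ" => weightedSawtoothPrimitive

theorem weightedSawtoothPrimitive_zero : Φ 0 = 0 := by
  simp [weightedSawtoothPrimitive]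

@[fun_prop]
theorem continuous_weightedSawtoothPrimitive : Continuous Φ := by
  have h := ContinuousOn.comp_fract
    (f := fun (s v : ℝ) => (s - v) * (v * (1 - v)) / 2 + v ^ 2 / 4 - v ^ 3 / 3 - (s - v) / 12)
    (by fun_prop) continuous_id (fun s => by ring)
  convert h using 2 with u
  simp [weightedSawtoothPrimitive, ← Int.self_sub_fract]

theorem weightedSawtoothPrimitive_eq_of_floor_eq {n : ℤ} {v : ℝ} (hv : ⌊v⌋ = n) :
    Φ v = n * ((v - n) * (1 - (v - n))) / 2 + (v - n) ^ 2 / 4 - (v - n) ^ 3 / 3 - n / 12 := by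
  rw [weightedSawtoothPrimitive, ← Int.self_sub_floor, hv]

theorem hasDerivWithinAt_weightedSawtoothPrimitive (u : ℝ) :
    HasDerivWithinAt Φ (u * (1 / 2 - Int.fract u)) (Ici u) u := by
  set n := ⌊u⌋
  have hw : HasDerivAt (fun v : ℝ => v - n) 1 u := (hasDerivAt_id u).sub_const _
  have hpoly := (((((hw.mul ((hasDerivAt_const u (1 : ℝ)).sub hw)).const_mul
    (n : ℝ)).div_const 2).add ((hw.pow 2).div_const 4)).sub
    ((hw.pow 3).div_const 3)).sub_const ((n : ℝ) / 12)
  have hlocal : Φ =ᶠ[nhdsWithin u (Ici u)] fun v =>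
      n * ((v - n) * (1 - (v - n))) / 2 + (v - n) ^ 2 / 4 - (v - n) ^ 3 / 3 - n / 12 := by
    filter_upwards [inter_mem_nhdsWithin (Ici u) (Iio_mem_nhds (Int.lt_floor_add_one u))]
      with v ⟨huv, hvn⟩
    refine weightedSawtoothPrimitive_eq_of_floor_eq (Int.floor_eq_iff.mpr ⟨?_, ?_⟩)
    · exact (Int.floor_le u).trans huv
    · exact_mod_cast hvn
  refine (hpoly.hasDerivWithinAt.congr_of_eventuallyEq hlocal ?_).congr_deriv ?_
  · exact weightedSawtoothPrimitive_eq_of_floor_eq rfl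
  · simp only [Int.fract, n, Pi.sub_apply]; push_cast; ring

theorem abs_weightedSawtoothPrimitive_le {x : ℝ} (hx : 0 ≤ x) : |Φ x| ≤ x := by
  have hn : (0 : ℝ) ≤ ⌊x⌋ := by exact_mod_cast Int.floor_nonneg.mpr hx
  have hf0 := Int.fract_nonneg x
  have hf1 := Int.fract_lt_one x
  have hx' : x = ⌊x⌋ + Int.fract x := (Int.floor_add_fract x).symm
  rw [abs_le, weightedSawtoothPrimitive]
  constructor <;>
    nlinarith [mul_nonneg hn (mul_nonneg hf0 (sub_nonneg.2 hf1.le)), mul_nonneg hf0 hf0,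
      mul_nonneg (mul_nonneg hf0 hf0) (sub_nonneg.2 hf1.le), sq_nonneg (Int.fract x - 1 / 2)]

theorem intervalIntegrable_half_sub_fract {f : ℝ → ℝ} (hf : Measurable f) (a b : ℝ) :
    IntervalIntegrable (fun s => 1 / 2 - Int.fract (f s)) MeasureTheory.volume a b := by
  refine (intervalIntegrable_const (c := (1 : ℝ))).mono_fun'
    ((measurable_const.sub (measurable_fract.comp hf)).aestronglyMeasurable) ?_
  refine Filter.Eventually.of_forall fun s => ?_
  have := Int.fract_nonneg (f s)
  have := Int.fract_lt_one (f s)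
  simp only [Real.norm_eq_abs, abs_le]
  constructor <;> linarith

theorem integral_half_sub_fract_mul_sqrt {c t : ℝ} (hc : 0 < c) (ht : 0 ≤ t) :
    ∫ s in (0 : ℝ)..t, (1 / 2 - Int.fract (c * √s)) = 2 / c ^ 2 * Φ (c * √t) := by
  have hderiv : ∀ s ∈ Ioo (min 0 t) (max 0 t), HasDerivWithinAt (fun s => 2 / c ^ 2 * Φ (c * √s))
      (1 / 2 - Int.fract (c * √s)) (Ioi s) s := by
    intro s hs
    rw [min_eq_left ht, max_eq_right ht] at hs
    have hs0 : √s ≠ 0 := (Real.sqrt_pos.mpr hs.1).ne'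
    have hinner : HasDerivWithinAt (fun y => c * √y) (c * (1 / (2 * √s))) (Ici s) s :=
      ((Real.hasDerivAt_sqrt hs.1.ne').const_mul c).hasDerivWithinAt
    have hmaps : MapsTo (fun y => c * √y) (Ici s) (Ici (c * √s)) :=
      fun y hy => mul_le_mul_of_nonneg_left (Real.sqrt_le_sqrt hy) hc.le
    refine ((((hasDerivWithinAt_weightedSawtoothPrimitive (c * √s)).comp s hinner hmaps).const_mul
      (2 / c ^ 2)).mono Ioi_subset_Ici_self).congr_deriv ?_
    field_simp
  rw [intervalIntegral.integral_eq_sub_of_hasDeriv_right (by fun_prop) hderiv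
    (intervalIntegrable_half_sub_fract (by fun_prop) 0 t)]
  simp [weightedSawtoothPrimitive_zero]

/-- The key averaging estimate: the average over `[0,t]` of
`⌊c√s⌋ + 1/2 − c√s` is `O(t^{-1/2})`. -/
theorem average_floor_sqrt_estimate (c : ℝ) (hc : 0 < c) :
    ∃ C > (0 : ℝ), ∀ t : ℝ, 1 ≤ t →
      |(1 / t) * ∫ s in (0:ℝ)..t, ((⌊c * Real.sqrt s⌋ : ℝ) + 1 / 2 - c * Real.sqrt s)| ≤
        C * t ^ (-(1/2) : ℝ) := by
  refine ⟨2 / c, by positivity, fun t ht => ?_⟩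
  have ht0 : 0 < t := one_pos.trans_le ht
  have hintegrand : ∀ s : ℝ, (⌊c * √s⌋ : ℝ) + 1 / 2 - c * √s = 1 / 2 - Int.fract (c * √s) :=
    fun s => by rw [← Int.self_sub_floor]; ring
  simp_rw [hintegrand, integral_half_sub_fract_mul_sqrt hc ht0.le, Real.rpow_neg ht0.le,
    ← Real.sqrt_eq_rpow, abs_mul, abs_of_pos (by positivity : 0 < 1 / t),
    abs_of_pos (by positivity : 0 < 2 / c ^ 2)]
  calc 1 / t * (2 / c ^ 2 * |Φ (c * √t)|)
      ≤ 1 / t * (2 / c ^ 2 * (c * √t)) := by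
        gcongr; exact abs_weightedSawtoothPrimitive_le (by positivity)
    _ = 2 / c * (√t)⁻¹ := by
        field_simp
        exact Real.sq_sqrt ht0.le
end

section
/- Let a > 0 and let N_T(t) = #{(j,k) ∈ ℤ² : π²(j² + k²)/a² ≤ t}. Then for every t ≥ 0: (i) #{(j,k) ∈ ℤ² : 0 ≤ j ≤ k, π²(j² + k²)/a² ≤ t} = (1/8)N_T(t) + (1/2)(⌊a√t/π⌋ + 1/2) + (1/2)(⌊a√t/(√2 π)⌋ + 1/2) + 3/8, and (ii) #{(j,k) ∈ ℤ² : 0 < j < k, π²(j² + k²)/a² ≤ t} = (1/8)N_T(t) − (1/2)(⌊a√t/π⌋ + 1/2) − (1/2)(⌊a√t/(√2 π)⌋ + 1/2) + 3/8. -/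
open Real

/-! The lattice disk `j² + k² ≤ r²`, with `r = a√t/π`, is invariant under the symmetry group of
the square. Folding it along the reflections `j ↦ -j`, `k ↦ -k` and `(j, k) ↦ (k, j)` exhibits
it as eight copies of the open sector `0 < j < k`, four copies each of the rays `j = 0 < k` and
`0 < j = k`, and the origin, while the closed sector `0 ≤ j ≤ k` contains one copy of each.
The rays contain `⌊r⌋` and `⌊r/√2⌋` points, and both identities follow by eliminating the open
sector between these two decompositions. -/

open Set

theorem Set.ncard_eq_two_mul_ncard_add_ncard_of_involutive {α : Type*} {e : α → α}
    (he : Function.Involutive e) {s : Set α} (hs : s.Finite) (hes : MapsTo e s s)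
    {p q : α → Prop} (hp : ∀ x, p x → ¬ p (e x)) (hq : ∀ x, q x → e x = x)
    (hcover : ∀ x ∈ s, p x ∨ p (e x) ∨ q x) :
    s.ncard = 2 * {x ∈ s | p x}.ncard + {x ∈ s | q x}.ncard := by
  have hsplit : s = {x ∈ s | p x} ∪ e '' {x ∈ s | p x} ∪ {x ∈ s | q x} := by
    refine Subset.antisymm (fun x hx => ?_) ?_
    · rcases hcover x hx with h | h | h
      · exact .inl (.inl ⟨hx, h⟩)
      · exact .inl (.inr ⟨e x, ⟨hes hx, h⟩, he x⟩)
      · exact .inr ⟨hx, h⟩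
    · rintro x ((hx | ⟨y, hy, rfl⟩) | hx)
      exacts [hx.1, hes hy.1, hx.1]
  have hdisj₁ : Disjoint {x ∈ s | p x} (e '' {x ∈ s | p x}) := by
    rw [disjoint_left]
    rintro _ hx ⟨y, hy, rfl⟩
    exact hp y hy.2 hx.2
  have hdisj₂ : Disjoint ({x ∈ s | p x} ∪ e '' {x ∈ s | p x}) {x ∈ s | q x} := by
    rw [disjoint_right]
    rintro x ⟨-, hqx⟩ (hx | ⟨y, hy, rfl⟩)
    · exact hp x hx.2 ((hq x hqx).symm ▸ hx.2)
    · have hfix : e y = y := by simpa only [he y, eq_comm] using hq _ hqx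
      exact hp y hy.2 (hfix.symm ▸ hy.2)
  have hfin : {x ∈ s | p x}.Finite := hs.subset fun x hx => hx.1
  nth_rw 1 [hsplit]
  rw [ncard_union_eq hdisj₂ (hfin.union (hfin.image e)) (hs.subset fun x hx => hx.1),
    ncard_union_eq hdisj₁ hfin (hfin.image e), ncard_image_of_injective _ he.injective]
  ring

namespace LatticeSector

def openSector : Set (ℤ × ℤ) := {x | 0 < x.1 ∧ x.1 < x.2}

def closedSector : Set (ℤ × ℤ) := {x | 0 ≤ x.1 ∧ x.1 ≤ x.2}

def axisRay : Set (ℤ × ℤ) := {x | x.1 = 0 ∧ 0 < x.2}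

def diagonalRay : Set (ℤ × ℤ) := {x | 0 < x.1 ∧ x.1 = x.2}

theorem ncard_inter_closedSector {D : Set (ℤ × ℤ)} (hD : D.Finite) :
    (D ∩ closedSector).ncard = (D ∩ openSector).ncard + (D ∩ axisRay).ncard
      + (D ∩ diagonalRay).ncard + (D ∩ {0}).ncard := by
  have hsplit : closedSector = openSector ∪ axisRay ∪ diagonalRay ∪ {0} := by
    ext ⟨j, k⟩
    simp only [closedSector, openSector, axisRay, diagonalRay, mem_union, mem_ofPred_eq,
      mem_singleton_iff, Prod.mk_eq_zero]
    omega
  have hfin (S : Set (ℤ × ℤ)) : (D ∩ S).Finite := hD.inter_of_left S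
  simp only [hsplit, inter_union_distrib_left]
  rw [ncard_union_eq _ ((hfin _).union (hfin _) |>.union (hfin _)) (hfin _),
    ncard_union_eq _ ((hfin _).union (hfin _)) (hfin _), ncard_union_eq _ (hfin _) (hfin _)]
  all_goals
    rw [disjoint_left]
    rintro ⟨j, k⟩ h₁ h₂
    simp only [openSector, axisRay, diagonalRay, mem_union, mem_inter_iff, mem_ofPred_eq,
      mem_singleton_iff, Prod.mk_eq_zero] at h₁ h₂
    omega

theorem ncard_sep_pos_fst_snd_eq_zero {D : Set (ℤ × ℤ)} (hswap : MapsTo Prod.swap D D) :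
    {x ∈ D | 0 < x.1 ∧ x.2 = 0}.ncard = (D ∩ axisRay).ncard := by
  rw [← ncard_image_of_injective _ Prod.swap_injective]
  congr 1
  ext ⟨j, k⟩
  simp only [image_swap_eq_preimage_swap, mem_preimage, Prod.swap_prod_mk, mem_inter_iff,
    axisRay, mem_ofPred_eq]
  exact ⟨fun ⟨h, hj, hk⟩ => ⟨hswap h, hk, hj⟩, fun ⟨h, hk, hj⟩ => ⟨hswap h, hj, hk⟩⟩

theorem ncard_sep_pos_fst_pos_snd {D : Set (ℤ × ℤ)} (hD : D.Finite)
    (hswap : MapsTo Prod.swap D D) :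
    {x ∈ D | 0 < x.1 ∧ 0 < x.2}.ncard = 2 * (D ∩ openSector).ncard + (D ∩ diagonalRay).ncard := by
  have := ncard_eq_two_mul_ncard_add_ncard_of_involutive (e := Prod.swap)
    (s := {x ∈ D | 0 < x.1 ∧ 0 < x.2}) Prod.swap_swap (hD.subset fun x hx => hx.1)
    (fun x hx => ⟨hswap hx.1, hx.2.2, hx.2.1⟩) (p := fun x => x.1 < x.2)
    (fun x h => by rw [Prod.fst_swap, Prod.snd_swap]; omega) (q := fun x => x.1 = x.2)
    (fun x h => Prod.ext h.symm h)
    (fun x _ => by rw [Prod.fst_swap, Prod.snd_swap]; omega)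
  convert this using 4 <;> ext ⟨j, k⟩ <;>
    simp only [mem_inter_iff, mem_ofPred_eq, openSector, diagonalRay, and_assoc] <;>
    exact and_congr_right fun _ => by omega

theorem ncard_sep_eq_two_mul_ncard_sep_pos_snd_add {D : Set (ℤ × ℤ)} (hD : D.Finite)
    (hneg : MapsTo (fun x : ℤ × ℤ => (x.1, -x.2)) D D) (P : ℤ → Prop) :
    {x ∈ D | P x.1}.ncard =
      2 * {x ∈ D | P x.1 ∧ 0 < x.2}.ncard + {x ∈ D | P x.1 ∧ x.2 = 0}.ncard := by
  simpa only [mem_ofPred_eq, and_assoc] using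
    ncard_eq_two_mul_ncard_add_ncard_of_involutive (e := fun x : ℤ × ℤ => (x.1, -x.2))
      (s := {x ∈ D | P x.1}) (fun x => by simp) (hD.subset fun x hx => hx.1)
      (fun x hx => ⟨hneg hx.1, hx.2⟩) (p := fun x => 0 < x.2) (fun x h => by omega)
      (q := fun x => x.2 = 0) (fun x h => Prod.ext rfl (by simp [h])) (fun x _ => by omega)

theorem ncard_eq_of_mapsTo_neg_fst_of_mapsTo_swap {D : Set (ℤ × ℤ)} (hD : D.Finite)
    (hneg : MapsTo (fun x : ℤ × ℤ => (-x.1, x.2)) D D) (hswap : MapsTo Prod.swap D D) :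
    D.ncard = 8 * (D ∩ openSector).ncard + 4 * (D ∩ axisRay).ncard
      + 4 * (D ∩ diagonalRay).ncard + (D ∩ {0}).ncard := by
  have hneg₂ : MapsTo (fun x : ℤ × ℤ => (x.1, -x.2)) D D := fun x hx => hswap (hneg (hswap hx))
  have hfst : D.ncard = 2 * {x ∈ D | 0 < x.1}.ncard + {x ∈ D | x.1 = 0}.ncard :=
    ncard_eq_two_mul_ncard_add_ncard_of_involutive (e := fun x : ℤ × ℤ => (-x.1, x.2))
      (fun x => by simp) hD hneg (fun x h => by omega)
      (fun x h => Prod.ext (by simp [h]) rfl) (fun x _ => by omega)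
  have hfst_pos := ncard_sep_eq_two_mul_ncard_sep_pos_snd_add hD hneg₂ (0 < ·)
  have hfst_zero : {x ∈ D | x.1 = 0}.ncard = 2 * (D ∩ axisRay).ncard + (D ∩ {0}).ncard := by
    convert ncard_sep_eq_two_mul_ncard_sep_pos_snd_add hD hneg₂ (· = 0) using 4 <;>
      ext ⟨j, k⟩ <;>
      simp only [mem_inter_iff, mem_ofPred_eq, mem_singleton_iff, Prod.mk_eq_zero, axisRay]
  have hquadrant := ncard_sep_pos_fst_pos_snd hD hswap
  have hhalf_axis := ncard_sep_pos_fst_snd_eq_zero hswap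
  omega

theorem setOf_pos_sq_le_sq_eq_Icc {s : ℝ} (hs : 0 ≤ s) :
    {k : ℤ | 0 < k ∧ (k : ℝ) ^ 2 ≤ s ^ 2} = Icc 1 ⌊s⌋ := by
  ext k
  simp only [mem_ofPred_eq, mem_Icc, Int.le_floor, ← Order.one_le_iff_pos]
  exact and_congr_right fun hk =>
    pow_le_pow_iff_left₀ (Int.cast_nonneg (zero_le_one.trans hk)) hs two_ne_zero

theorem ncard_setOf_pos_sq_le_sq {s : ℝ} (hs : 0 ≤ s) :
    ({k : ℤ | 0 < k ∧ (k : ℝ) ^ 2 ≤ s ^ 2}.ncard : ℤ) = ⌊s⌋ := by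
  rw [setOf_pos_sq_le_sq_eq_Icc hs, ← Finset.coe_Icc, ncard_coe_finset, Int.card_Icc,
    add_sub_cancel_right, Int.toNat_of_nonneg (Int.floor_nonneg.2 hs)]

theorem finite_setOf_sq_le_sq (r : ℝ) : {k : ℤ | (k : ℝ) ^ 2 ≤ r ^ 2}.Finite := by
  refine (finite_Icc (-⌊|r|⌋) ⌊|r|⌋).subset fun k hk => ?_
  replace hk : (k : ℝ) ^ 2 ≤ r ^ 2 := hk
  obtain ⟨hlow, hupp⟩ := abs_le.1 (sq_le_sq.1 hk)
  refine ⟨neg_le.1 (Int.le_floor.2 ?_), Int.le_floor.2 hupp⟩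
  push_cast
  linarith

def latticeDisk (r : ℝ) : Set (ℤ × ℤ) := {x | (x.1 : ℝ) ^ 2 + (x.2 : ℝ) ^ 2 ≤ r ^ 2}

theorem latticeDisk_finite (r : ℝ) : (latticeDisk r).Finite :=
  ((finite_setOf_sq_le_sq r).prod (finite_setOf_sq_le_sq r)).subset fun x hx => by
    replace hx : (x.1 : ℝ) ^ 2 + (x.2 : ℝ) ^ 2 ≤ r ^ 2 := hx
    exact ⟨show (x.1 : ℝ) ^ 2 ≤ r ^ 2 by nlinarith [sq_nonneg (x.2 : ℝ)],
      show (x.2 : ℝ) ^ 2 ≤ r ^ 2 by nlinarith [sq_nonneg (x.1 : ℝ)]⟩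

theorem mapsTo_neg_fst_latticeDisk (r : ℝ) :
    MapsTo (fun x : ℤ × ℤ => (-x.1, x.2)) (latticeDisk r) (latticeDisk r) := fun x hx => by
  simpa [latticeDisk] using hx

theorem mapsTo_swap_latticeDisk (r : ℝ) : MapsTo Prod.swap (latticeDisk r) (latticeDisk r) :=
  fun x hx => by simpa [latticeDisk, add_comm] using hx

theorem ncard_latticeDisk_inter_axisRay {r : ℝ} (hr : 0 ≤ r) :
    ((latticeDisk r ∩ axisRay).ncard : ℤ) = ⌊r⌋ := by
  have himage : latticeDisk r ∩ axisRay =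
      (fun k => (0, k)) '' {k : ℤ | 0 < k ∧ (k : ℝ) ^ 2 ≤ r ^ 2} := by
    ext ⟨j, k⟩
    simp only [latticeDisk, axisRay, mem_inter_iff, mem_ofPred_eq, mem_image, Prod.mk.injEq]
    constructor
    · rintro ⟨hr, rfl, hk⟩
      exact ⟨k, ⟨hk, by simpa using hr⟩, rfl, rfl⟩
    · rintro ⟨k, ⟨hk, hr⟩, rfl, rfl⟩
      exact ⟨by simpa using hr, rfl, hk⟩
  rw [himage, ncard_image_of_injective _ (Prod.mk_right_injective 0), ncard_setOf_pos_sq_le_sq hr]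

theorem ncard_latticeDisk_inter_diagonalRay {r : ℝ} (hr : 0 ≤ r) :
    ((latticeDisk r ∩ diagonalRay).ncard : ℤ) = ⌊r / √2⌋ := by
  have hsq (k : ℤ) : (k : ℝ) ^ 2 + (k : ℝ) ^ 2 ≤ r ^ 2 ↔ (k : ℝ) ^ 2 ≤ (r / √2) ^ 2 := by
    rw [div_pow, sq_sqrt zero_le_two, le_div_iff₀ zero_lt_two]
    constructor <;> intro h <;> linarith
  have himage : latticeDisk r ∩ diagonalRay =
      (fun k => (k, k)) '' {k : ℤ | 0 < k ∧ (k : ℝ) ^ 2 ≤ (r / √2) ^ 2} := by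
    ext ⟨j, k⟩
    simp only [latticeDisk, diagonalRay, mem_inter_iff, mem_ofPred_eq, mem_image, Prod.mk.injEq]
    constructor
    · rintro ⟨hr, hj, rfl⟩
      exact ⟨j, ⟨hj, (hsq j).1 hr⟩, rfl, rfl⟩
    · rintro ⟨k, ⟨hk, hr⟩, rfl, rfl⟩
      exact ⟨(hsq k).2 hr, hk, rfl⟩
  rw [himage, ncard_image_of_injective _ fun j k h => (Prod.mk.inj h).1,
    ncard_setOf_pos_sq_le_sq (div_nonneg hr (sqrt_nonneg 2))]

theorem ncard_latticeDisk_inter_zero (r : ℝ) : (latticeDisk r ∩ {0}).ncard = 1 := by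
  rw [inter_singleton_of_mem (by simp [latticeDisk, sq_nonneg]), ncard_singleton]

end LatticeSector

open LatticeSector

/-- Lattice-point counting identities for the right isosceles triangle (half of a square
of side `a`): Neumann (sector `0 ≤ j ≤ k`) and Dirichlet (sector `0 < j < k`) counting
functions in terms of the full lattice count `N_T`. -/
theorem right_isosceles_triangle_count (a : ℝ) (ha : 0 < a) (t : ℝ) (ht : 0 ≤ t) :
    (({p : ℤ × ℤ | 0 ≤ p.1 ∧ p.1 ≤ p.2 ∧
        π ^ 2 * ((p.1 : ℝ) ^ 2 + (p.2 : ℝ) ^ 2) / a ^ 2 ≤ t}.ncard : ℝ) =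
      (1 / 8) * ({p : ℤ × ℤ |
          π ^ 2 * ((p.1 : ℝ) ^ 2 + (p.2 : ℝ) ^ 2) / a ^ 2 ≤ t}.ncard : ℝ)
        + (1 / 2) * ((⌊a * Real.sqrt t / π⌋ : ℝ) + 1 / 2)
        + (1 / 2) * ((⌊a * Real.sqrt t / (Real.sqrt 2 * π)⌋ : ℝ) + 1 / 2) + 3 / 8)
    ∧
    (({p : ℤ × ℤ | 0 < p.1 ∧ p.1 < p.2 ∧
        π ^ 2 * ((p.1 : ℝ) ^ 2 + (p.2 : ℝ) ^ 2) / a ^ 2 ≤ t}.ncard : ℝ) =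
      (1 / 8) * ({p : ℤ × ℤ |
          π ^ 2 * ((p.1 : ℝ) ^ 2 + (p.2 : ℝ) ^ 2) / a ^ 2 ≤ t}.ncard : ℝ)
        - (1 / 2) * ((⌊a * Real.sqrt t / π⌋ : ℝ) + 1 / 2)
        - (1 / 2) * ((⌊a * Real.sqrt t / (Real.sqrt 2 * π)⌋ : ℝ) + 1 / 2) + 3 / 8) := by
  set r := a * √t / π with hr_def
  have hr : 0 ≤ r := by positivity
  have hcond (x : ℤ × ℤ) :
      π ^ 2 * ((x.1 : ℝ) ^ 2 + (x.2 : ℝ) ^ 2) / a ^ 2 ≤ t ↔ x ∈ latticeDisk r := by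
    rw [latticeDisk, mem_ofPred_eq, div_le_iff₀ (by positivity), hr_def, div_pow, mul_pow,
      sq_sqrt ht, le_div_iff₀ (by positivity)]
    constructor <;> intro h <;> linarith
  have hdisk : {p : ℤ × ℤ | π ^ 2 * ((p.1 : ℝ) ^ 2 + (p.2 : ℝ) ^ 2) / a ^ 2 ≤ t} =
      latticeDisk r := ext hcond
  have hclosed : {p : ℤ × ℤ | 0 ≤ p.1 ∧ p.1 ≤ p.2 ∧
      π ^ 2 * ((p.1 : ℝ) ^ 2 + (p.2 : ℝ) ^ 2) / a ^ 2 ≤ t} = latticeDisk r ∩ closedSector :=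
    ext fun x => by simp only [mem_ofPred_eq, hcond, mem_inter_iff, closedSector]; tauto
  have hopen : {p : ℤ × ℤ | 0 < p.1 ∧ p.1 < p.2 ∧
      π ^ 2 * ((p.1 : ℝ) ^ 2 + (p.2 : ℝ) ^ 2) / a ^ 2 ≤ t} = latticeDisk r ∩ openSector :=
    ext fun x => by simp only [mem_ofPred_eq, hcond, mem_inter_iff, openSector]; tauto
  have hfloor : ⌊a * √t / (√2 * π)⌋ = ⌊r / √2⌋ := by rw [hr_def, div_div, mul_comm π]
  have haxis : ((latticeDisk r ∩ axisRay).ncard : ℝ) = ⌊r⌋ := by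
    exact_mod_cast ncard_latticeDisk_inter_axisRay hr
  have hdiagonal : ((latticeDisk r ∩ diagonalRay).ncard : ℝ) = ⌊r / √2⌋ := by
    exact_mod_cast ncard_latticeDisk_inter_diagonalRay hr
  rw [hdisk, hclosed, hopen, hfloor, ncard_inter_closedSector (latticeDisk_finite r),
    ncard_eq_of_mapsTo_neg_fst_of_mapsTo_swap (latticeDisk_finite r)
      (mapsTo_neg_fst_latticeDisk r) (mapsTo_swap_latticeDisk r)]
  push_cast
  rw [haxis, hdiagonal, ncard_latticeDisk_inter_zero]
  constructor <;> ring
end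

section
/- Let a > 0 and let N_T(t) = #{(j,k) ∈ ℤ² : π²(j² + k²)/a² ≤ t}. Then for every t ≥ 0, #{(j,k) ∈ ℤ² : 0 ≤ j < k, π²(j² + k²)/a² ≤ t} = (1/8)N_T(t) + (1/2)(⌊a√t/π⌋ + 1/2) − (1/2)(⌊a√t/(√2 π)⌋ + 1/2) − 1/8. -/
/-!
With `B = a²t/π²` the counted points form the lattice disc `x² + y² ≤ B`, which is invariant
under the dihedral group generated by `(x, y) ↦ (-x, y)` and `(x, y) ↦ (y, x)`. Each reflection
pairs off the points strictly on the two sides of its mirror line, so cutting the disc along the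
axes and the diagonal shows that it consists of the origin, four half-axes of `⌊√B⌋` points,
four half-diagonals of `⌊√(B/2)⌋` points and eight copies of the open sector `0 < x < y`.
The sector `0 ≤ x < y` is the open sector plus one half-axis.
-/

open Real Finset

theorem Finset.card_eq_two_mul_card_filter_pos_add {α G : Type*} [AddCommGroup G] [LinearOrder G]
    [IsOrderedAddMonoid G] (s : Finset α) {σ : α → α} (hσ : Function.Involutive σ)
    (hs : ∀ p ∈ s, σ p ∈ s) {g : α → G} (hg : ∀ p, g (σ p) = -g p) :
    #s = 2 * #{p ∈ s | 0 < g p} + #{p ∈ s | g p = 0} := by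
  have hneg : #{p ∈ s | g p < 0} = #{p ∈ s | 0 < g p} := by
    refine card_nbij' σ σ ?_ ?_ (fun p _ => hσ p) (fun p _ => hσ p) <;>
      intro p hp <;> simp only [mem_coe, mem_filter, hg] at hp ⊢ <;>
      exact ⟨hs p hp.1, by simpa using hp.2⟩
  have hsplit := card_filter_add_card_filter_not (s := {p ∈ s | ¬ g p < 0}) (fun p => g p = 0)
  rw [filter_filter, filter_filter] at hsplit
  rw [← card_filter_add_card_filter_not (s := s) (fun p => g p < 0), hneg, ← hsplit,
    filter_congr (fun p _ => show ¬ g p < 0 ∧ g p = 0 ↔ g p = 0 by grind),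
    filter_congr (fun p _ => show ¬ g p < 0 ∧ ¬ g p = 0 ↔ 0 < g p by grind)]
  ring

theorem Finset.card_filter_eq_two_mul_card_filter_pos_add {α G : Type*} [AddCommGroup G]
    [LinearOrder G] [IsOrderedAddMonoid G] (s : Finset α) {σ : α → α}
    (hσ : Function.Involutive σ) (hs : ∀ p ∈ s, σ p ∈ s) (P : α → Prop) [DecidablePred P]
    (hP : ∀ p, P (σ p) ↔ P p) {g : α → G} (hg : ∀ p, g (σ p) = -g p) :
    #{p ∈ s | P p} = 2 * #{p ∈ s | P p ∧ 0 < g p} + #{p ∈ s | P p ∧ g p = 0} := by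
  simpa only [filter_filter] using card_eq_two_mul_card_filter_pos_add {p ∈ s | P p} hσ
    (fun p hp => by simp only [mem_filter, hP] at hp ⊢; exact ⟨hs p hp.1, hp.2⟩) hg

noncomputable def latticeDisc (B : ℝ) : Finset (ℤ × ℤ) :=
  {p ∈ Icc (-⌊√B⌋, -⌊√B⌋) (⌊√B⌋, ⌊√B⌋) | ((p.1 ^ 2 + p.2 ^ 2 : ℤ) : ℝ) ≤ B}

theorem mem_latticeDisc {B : ℝ} {p : ℤ × ℤ} :
    p ∈ latticeDisc B ↔ ((p.1 ^ 2 + p.2 ^ 2 : ℤ) : ℝ) ≤ B := by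
  have hbound : ∀ x y : ℤ, ((x ^ 2 + y ^ 2 : ℤ) : ℝ) ≤ B → -⌊√B⌋ ≤ x ∧ x ≤ ⌊√B⌋ := by
    intro x y h
    rw [← abs_le, Int.le_floor, Int.cast_abs]
    exact abs_le_sqrt (by push_cast at h; nlinarith)
  simp only [latticeDisc, mem_filter, mem_Icc, Prod.le_def, and_iff_right_iff_imp]
  intro h
  have hx := hbound p.1 p.2 h
  have hy := hbound p.2 p.1 (by rwa [add_comm])
  exact ⟨⟨hx.1, hy.1⟩, hx.2, hy.2⟩

theorem le_floor_sqrt_div_iff {B c : ℝ} (hc : 0 < c) {k : ℤ} (hk : 0 < k) :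
    k ≤ ⌊√(B / c)⌋ ↔ (k : ℝ) ^ 2 * c ≤ B := by
  rw [Int.le_floor, Real.le_sqrt' (by exact_mod_cast hk), le_div_iff₀ hc]

theorem card_filter_latticeDisc_ray (B : ℝ) {u : ℤ × ℤ} {c : ℕ} (hu : u.1 ^ 2 + u.2 ^ 2 = c)
    (hc : 0 < c) (P : ℤ × ℤ → Prop) [DecidablePred P]
    (hP : ∀ p, P p ↔ ∃ k : ℤ, 0 < k ∧ p = k • u) :
    (#{p ∈ latticeDisc B | P p} : ℤ) = ⌊√(B / c)⌋ := by
  have hmem : ∀ k : ℤ, 0 < k → (k • u ∈ latticeDisc B ↔ k ≤ ⌊√(B / c)⌋) := by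
    intro k hk
    rw [mem_latticeDisc, le_floor_sqrt_div_iff (by exact_mod_cast hc) hk, ← Int.cast_natCast, ← hu]
    simp only [Prod.smul_fst, Prod.smul_snd, smul_eq_mul]
    push_cast
    ring_nf
  have hu0 : u ≠ 0 := by rintro rfl; simp at hu; omega
  have himage : {p ∈ latticeDisc B | P p} = (Icc 1 ⌊√(B / c)⌋).image (· • u) := by
    ext p
    simp only [mem_filter, mem_image, mem_Icc, hP]
    constructor
    · rintro ⟨h, k, hk, rfl⟩
      exact ⟨k, ⟨hk, (hmem k hk).1 h⟩, rfl⟩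
    · rintro ⟨k, ⟨hk, hkB⟩, rfl⟩
      exact ⟨(hmem k hk).2 hkB, k, hk, rfl⟩
  rw [himage, card_image_of_injective _ (smul_left_injective ℤ hu0), Int.card_Icc,
    add_sub_cancel_right, Int.toNat_of_nonneg (Int.floor_nonneg.2 (sqrt_nonneg _))]

theorem eight_mul_card_latticeDisc_filter_sector (B : ℝ) (hB : 0 ≤ B) :
    8 * (#{p ∈ latticeDisc B | 0 ≤ p.1 ∧ p.1 < p.2} : ℤ) =
      #(latticeDisc B) + 4 * ⌊√B⌋ - 4 * ⌊√(B / 2)⌋ - 1 := by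
  have hrayY := card_filter_latticeDisc_ray B (u := (0, 1)) (c := 1) (by simp) one_pos
    (fun p => 0 < p.2 ∧ p.1 = 0) (by rintro ⟨x, y⟩; simp)
  have hrayX := card_filter_latticeDisc_ray B (u := (1, 0)) (c := 1) (by simp) one_pos
    (fun p => p.2 = 0 ∧ 0 < p.1) (by rintro ⟨x, y⟩; simp; grind)
  have hdiagonal := card_filter_latticeDisc_ray B (u := (1, 1)) (c := 2) (by simp) two_pos
    (fun p => (0 < p.2 ∧ 0 < p.1) ∧ p.2 - p.1 = 0) (by rintro ⟨x, y⟩; simp; grind)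
  have horigin : #{p ∈ latticeDisc B | p.2 = 0 ∧ p.1 = 0} = 1 := by
    refine card_eq_one.2 ⟨(0, 0), eq_singleton_iff_unique_mem.2 ⟨?_, ?_⟩⟩
    · simpa [mem_latticeDisc] using hB
    · rintro ⟨x, y⟩ h
      simp_all
  set D := latticeDisc B
  have hnegX : ∀ p ∈ D, (-p.1, p.2) ∈ D := by simp [D, mem_latticeDisc]
  have hnegY : ∀ p ∈ D, (p.1, -p.2) ∈ D := by simp [D, mem_latticeDisc]
  have hswap : ∀ p ∈ D, p.swap ∈ D := by simp [D, mem_latticeDisc, add_comm]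
  have invX : Function.Involutive fun p : ℤ × ℤ => (-p.1, p.2) := fun p => by simp
  have hD := card_eq_two_mul_card_filter_pos_add D (fun p => by simp) hnegY
    (g := fun p => p.2) fun p => rfl
  have hupper := card_filter_eq_two_mul_card_filter_pos_add D invX hnegX (0 < ·.2)
    (fun p => Iff.rfl) (g := fun p => p.1) fun p => rfl
  have hquadrant := card_filter_eq_two_mul_card_filter_pos_add D Prod.swap_swap hswap
    (fun p => 0 < p.2 ∧ 0 < p.1) (fun p => and_comm) (g := fun p => p.2 - p.1)
    fun p => by simp
  have haxis := card_filter_eq_two_mul_card_filter_pos_add D invX hnegX (·.2 = 0)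
    (fun p => Iff.rfl) (g := fun p => p.1) fun p => rfl
  have hsector : #{p ∈ D | 0 ≤ p.1 ∧ p.1 < p.2} =
      #{p ∈ D | (0 < p.2 ∧ 0 < p.1) ∧ 0 < p.2 - p.1} + #{p ∈ D | 0 < p.2 ∧ p.1 = 0} := by
    rw [← card_filter_add_card_filter_not (s := {p ∈ D | 0 ≤ p.1 ∧ p.1 < p.2}) (0 < ·.1),
      filter_filter, filter_filter]
    congr 2 <;> exact filter_congr fun p _ => by omega
  simp only [Nat.cast_one, div_one, Nat.cast_ofNat] at hrayY hrayX hdiagonal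
  omega

/-- Lattice-point counting identity for the right isosceles triangle with Neumann
conditions on the two equal sides and Dirichlet conditions on the hypotenuse
(sector `0 ≤ j < k`). -/
theorem right_isosceles_triangle_MN_count (a : ℝ) (ha : 0 < a) (t : ℝ) (ht : 0 ≤ t) :
    ({p : ℤ × ℤ | 0 ≤ p.1 ∧ p.1 < p.2 ∧
        π ^ 2 * ((p.1 : ℝ) ^ 2 + (p.2 : ℝ) ^ 2) / a ^ 2 ≤ t}.ncard : ℝ) =
      (1 / 8) * ({p : ℤ × ℤ |
          π ^ 2 * ((p.1 : ℝ) ^ 2 + (p.2 : ℝ) ^ 2) / a ^ 2 ≤ t}.ncard : ℝ)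
        + (1 / 2) * ((⌊a * Real.sqrt t / π⌋ : ℝ) + 1 / 2)
        - (1 / 2) * ((⌊a * Real.sqrt t / (Real.sqrt 2 * π)⌋ : ℝ) + 1 / 2) - 1 / 8 := by
  set B := t * a ^ 2 / π ^ 2
  have hB : 0 ≤ B := by positivity
  have hmem : ∀ p : ℤ × ℤ,
      π ^ 2 * ((p.1 : ℝ) ^ 2 + (p.2 : ℝ) ^ 2) / a ^ 2 ≤ t ↔ p ∈ latticeDisc B := by
    intro p
    rw [mem_latticeDisc, div_le_iff₀ (by positivity), le_div_iff₀ (by positivity)]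
    push_cast
    constructor <;> intro h <;> linarith
  have hsector : {p : ℤ × ℤ | 0 ≤ p.1 ∧ p.1 < p.2 ∧
      π ^ 2 * ((p.1 : ℝ) ^ 2 + (p.2 : ℝ) ^ 2) / a ^ 2 ≤ t} =
      ↑{p ∈ latticeDisc B | 0 ≤ p.1 ∧ p.1 < p.2} := by
    ext p
    simp only [Set.mem_ofPred_eq, coe_filter, hmem]
    tauto
  have hdisc : {p : ℤ × ℤ | π ^ 2 * ((p.1 : ℝ) ^ 2 + (p.2 : ℝ) ^ 2) / a ^ 2 ≤ t} =
      ↑(latticeDisc B) := by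
    ext p
    simp only [Set.mem_ofPred_eq, mem_coe, hmem]
  have hradius : a * √t / π = √B := by
    rw [sqrt_div' _ (sq_nonneg π), sqrt_mul ht, sqrt_sq ha.le, sqrt_sq pi_pos.le, mul_comm]
  have hradius_diag : a * √t / (√2 * π) = √(B / 2) := by
    rw [sqrt_div' _ zero_le_two, ← hradius, div_div, mul_comm π]
  rw [hsector, hdisc, Set.ncard_coe_finset, Set.ncard_coe_finset, hradius, hradius_diag]
  have hcount : (8 * #{p ∈ latticeDisc B | 0 ≤ p.1 ∧ p.1 < p.2} : ℝ) =
      #(latticeDisc B) + 4 * ⌊√B⌋ - 4 * ⌊√(B / 2)⌋ - 1 := by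
    exact_mod_cast eight_mul_card_latticeDisc_filter_sector B hB
  linarith
end

section
/- Define ψ(θ) = (1/24)(π/θ − θ/π) for θ > 0. Let n ≥ 3 and let θ₁, …, θₙ be real numbers with π/2 ≤ θⱼ < π for all j and θ₁ + ⋯ + θₙ = (n−2)π. Then 0 ≤ ∑ⱼ ψ(θⱼ) − 1/6 ≤ (1/12) ∑ⱼ (1 − θⱼ/π)². -/
open Real

/-- The polygonal corner constants `∑ ψ(θⱼ)` with `ψ(θ) = (1/24)(π/θ − θ/π)` converge to
the smooth-boundary constant `1/6`, with error controlled by `∑ (1 − θⱼ/π)²`. -/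
theorem polygon_corner_constant_approx (n : ℕ) (hn : 3 ≤ n) (θ : Fin n → ℝ)
    (hθ : ∀ j, π / 2 ≤ θ j ∧ θ j < π)
    (hsum : ∑ j, θ j = ((n : ℝ) - 2) * π) :
    0 ≤ (∑ j, (1 / 24) * (π / θ j - θ j / π)) - 1 / 6 ∧
      (∑ j, (1 / 24) * (π / θ j - θ j / π)) - 1 / 6 ≤
        (1 / 12) * ∑ j, (1 - θ j / π) ^ 2 := by
  have hπ : (0:ℝ) < π := pi_pos
  have hθpos : ∀ j, 0 < θ j := fun j => lt_of_lt_of_le (by linarith) (hθ j).1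
  have key : ∀ j, (1 / 24) * (π / θ j - θ j / π)
      = (1 / 24) * ((1 - θ j / π) ^ 2 / (θ j / π)) + (1 / 12) * (1 - θ j / π) := by
    intro j
    have h1 : θ j ≠ 0 := ne_of_gt (hθpos j)
    have h2 : π ≠ 0 := ne_of_gt hπ
    field_simp
    ring
  have hsumx : ∑ j, (1 - θ j / π) = 2 := by
    have : ∑ j, θ j / π = (n : ℝ) - 2 := by
      rw [← Finset.sum_div, hsum]
      field_simp
    rw [Finset.sum_sub_distrib, this]
    simp
  have hrw : (∑ j, (1 / 24) * (π / θ j - θ j / π)) - 1 / 6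
      = ∑ j, (1 / 24) * ((1 - θ j / π) ^ 2 / (θ j / π)) := by
    calc (∑ j, (1 / 24) * (π / θ j - θ j / π)) - 1 / 6
        = (∑ j, ((1 / 24) * ((1 - θ j / π) ^ 2 / (θ j / π)) + (1 / 12) * (1 - θ j / π))) - 1/6 := by
          rw [Finset.sum_congr rfl (fun j _ => key j)]
      _ = (∑ j, (1 / 24) * ((1 - θ j / π) ^ 2 / (θ j / π)))
            + (1/12) * (∑ j, (1 - θ j / π)) - 1/6 := by
          rw [Finset.sum_add_distrib, ← Finset.mul_sum, ← Finset.mul_sum]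
      _ = ∑ j, (1 / 24) * ((1 - θ j / π) ^ 2 / (θ j / π)) := by
          rw [hsumx]; ring
  rw [hrw]
  constructor
  · apply Finset.sum_nonneg
    intro j _
    have : 0 < θ j / π := div_pos (hθpos j) hπ
    positivity
  · rw [Finset.mul_sum]
    apply Finset.sum_le_sum
    intro j _
    have h1 : 1 / 2 ≤ θ j / π := by
      rw [le_div_iff₀ hπ]; nlinarith [(hθ j).1]
    have h2 : 0 < θ j / π := div_pos (hθpos j) hπ
    have : (1 - θ j / π) ^ 2 / (θ j / π) ≤ 2 * (1 - θ j / π) ^ 2 := by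
      rw [div_le_iff₀ h2]
      nlinarith [sq_nonneg (1 - θ j / π)]
    nlinarith [this]
end

section
/- Define g(x) = 1/6 − 2(x − ⌊x + 1/2⌋)². Then g is continuous, periodic of period 1, and has mean value zero (∫₀¹ g(x)dx = 0). Moreover, with N(s) = k² for k² − k ≤ s < k² + k and A(t) = (1/t)∫₀ᵗ (N(s) − s)ds − 1/3, there is a constant C such that |A(t) − g(√(t + 1/4))| ≤ C t^{−1/2} for all t ≥ 1. -/
open Real MeasureTheory Set

/-! On `[k² - k, k² + k)` the counting function equals `k²`, so `∫₀ᵗ N = k² (2t + 1 - k²) / 2`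
exactly, and `k` is the integer nearest to `u = √(t + 1/4)`. With `d = u - k`, the error
`A(t) - g(u)` is the explicit quantity `(d² - 1/4) (4kd + 3(d² - 1/4)) / (2t)`: the terms of
order one cancel, and since `|d| ≤ 1/2` what remains is at most `k / (2t) ≤ t^(-1/2)`. -/

-- `‖(x : UnitAddCircle)‖` is the distance from `x` to the nearest integer.
noncomputable def sphereOscillation (x : ℝ) : ℝ := 1 / 6 - 2 * ‖(x : UnitAddCircle)‖ ^ 2

lemma sphereOscillation_eq (x : ℝ) : sphereOscillation x = 1 / 6 - 2 * (x - round x) ^ 2 := by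
  rw [sphereOscillation, UnitAddCircle.norm_eq, sq_abs]

lemma continuous_sphereOscillation : Continuous sphereOscillation :=
  continuous_const.sub (continuous_const.mul ((AddCircle.continuous_mk' 1).norm.pow 2))

lemma periodic_sphereOscillation : Function.Periodic sphereOscillation 1 := fun x => by
  rw [sphereOscillation, sphereOscillation, AddCircle.coe_add_period]

lemma sphereOscillation_of_abs_le {x : ℝ} (hx : |x| ≤ 1 / 2) :
    sphereOscillation x = 1 / 6 - 2 * x ^ 2 := by
  rw [sphereOscillation,
    (AddCircle.norm_coe_eq_abs_iff (p := (1 : ℝ)) one_ne_zero).2 (by simpa using hx), sq_abs]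

lemma integral_sphereOscillation : ∫ x in (0 : ℝ)..1, sphereOscillation x = 0 := by
  have hshift := periodic_sphereOscillation.intervalIntegral_add_eq 0 (-(1 / 2))
  rw [zero_add] at hshift
  rw [hshift, intervalIntegral.integral_congr (g := fun x => 1 / 6 - 2 * x ^ 2)]
  · norm_num [integral_pow]
  · intro x hx
    rw [uIcc_of_le (by norm_num)] at hx
    exact sphereOscillation_of_abs_le (abs_le.2 ⟨hx.1, by linarith [hx.2]⟩)

def IsSphereCounting (N : ℝ → ℝ) : Prop :=
  ∀ k : ℕ, 1 ≤ k → ∀ s : ℝ,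
    (k : ℝ) ^ 2 - k ≤ s → s < (k : ℝ) ^ 2 + k → N s = (k : ℝ) ^ 2

noncomputable def sphereIndex (t : ℝ) : ℕ := ⌊√(t + 1 / 4) + 1 / 2⌋₊

lemma sphereIndex_eq_round (t : ℝ) : (sphereIndex t : ℝ) = round √(t + 1 / 4) := by
  rw [sphereIndex, natCast_floor_eq_intCast_floor (by positivity), round_eq]

lemma monotone_sphereIndex : Monotone sphereIndex := fun _ _ h =>
  Nat.floor_mono (by gcongr)

lemma one_le_sphereIndex {t : ℝ} (ht : 0 ≤ t) : 1 ≤ sphereIndex t := by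
  have : (1 : ℝ) / 2 ≤ √(t + 1 / 4) := by
    rw [show (1 : ℝ) / 2 = √((1 / 2) ^ 2) by simp]
    gcongr
    linarith
  exact Nat.le_floor (by push_cast; linarith)

lemma sphereIndex_mem_Ico {t : ℝ} (ht : 0 ≤ t) :
    t ∈ Ico ((sphereIndex t : ℝ) ^ 2 - sphereIndex t)
      ((sphereIndex t : ℝ) ^ 2 + sphereIndex t) := by
  have hk : (1 : ℝ) ≤ sphereIndex t := by exact_mod_cast one_le_sphereIndex ht
  have hlow := sub_half_lt_round √(t + 1 / 4)
  have hupp := round_le_add_half √(t + 1 / 4)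
  rw [← sphereIndex_eq_round] at hlow hupp
  have hsq : √(t + 1 / 4) ^ 2 = t + 1 / 4 := sq_sqrt (by linarith)
  constructor <;> nlinarith [sqrt_nonneg (t + 1 / 4)]

lemma sphereIndex_le_two_mul_sqrt {t : ℝ} (ht : 1 ≤ t) :
    (sphereIndex t : ℝ) ≤ 2 * √t := by
  have hk : (1 : ℝ) ≤ sphereIndex t := by exact_mod_cast one_le_sphereIndex (by linarith)
  have hlow := (sphereIndex_mem_Ico (by linarith : 0 ≤ t)).1
  refine le_of_sq_le_sq ?_ (by positivity)
  rw [mul_pow, sq_sqrt (by linarith)]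
  nlinarith

namespace IsSphereCounting

variable {N : ℝ → ℝ}

lemma eq_sphereIndex_sq (hN : IsSphereCounting N) {t : ℝ} (ht : 0 ≤ t) :
    N t = (sphereIndex t : ℝ) ^ 2 :=
  hN _ (one_le_sphereIndex ht) t (sphereIndex_mem_Ico ht).1 (sphereIndex_mem_Ico ht).2

lemma monotoneOn (hN : IsSphereCounting N) : MonotoneOn N (Ici 0) := fun a ha b hb hab => by
  rw [hN.eq_sphereIndex_sq ha, hN.eq_sphereIndex_sq hb]
  gcongr
  exact monotone_sphereIndex hab

lemma intervalIntegrable (hN : IsSphereCounting N) {a b : ℝ} (ha : 0 ≤ a) (hb : 0 ≤ b) :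
    IntervalIntegrable N volume a b :=
  (hN.monotoneOn.mono fun _ hx => le_min ha hb |>.trans hx.1).intervalIntegrable

lemma integral_block (hN : IsSphereCounting N) {k : ℕ} (hk : 1 ≤ k) {t : ℝ}
    (ht : t ∈ Icc ((k : ℝ) ^ 2 - k) ((k : ℝ) ^ 2 + k)) :
    ∫ s in ((k : ℝ) ^ 2 - k)..t, N s = (k : ℝ) ^ 2 * (t - ((k : ℝ) ^ 2 - k)) := by
  rw [intervalIntegral.integral_congr_Ioo_of_le ht.1 (g := fun _ => (k : ℝ) ^ 2)
    fun s hs => hN k hk s hs.1.le (hs.2.trans_le ht.2)]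
  simp [mul_comm]

lemma integral_zero_eq (hN : IsSphereCounting N) (k : ℕ) {t : ℝ}
    (ht : t ∈ Icc ((k : ℝ) ^ 2 - k) ((k : ℝ) ^ 2 + k)) :
    ∫ s in (0 : ℝ)..t, N s = (k : ℝ) ^ 2 * (2 * t + 1 - (k : ℝ) ^ 2) / 2 := by
  induction k generalizing t with
  | zero =>
    obtain rfl : t = 0 := by simpa using ht
    simp
  | succ k ih =>
    push_cast at ht ⊢
    have hsplit : (k : ℝ) ^ 2 + k = ((k + 1 : ℕ) : ℝ) ^ 2 - (k + 1 : ℕ) := by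
      push_cast; ring
    have hb : (0 : ℝ) ≤ (k : ℝ) ^ 2 + k := by positivity
    rw [← intervalIntegral.integral_add_adjacent_intervals (b := (k : ℝ) ^ 2 + k)
      (hN.intervalIntegrable le_rfl hb) (hN.intervalIntegrable hb (by linarith [ht.1])),
      ih ⟨by linarith, le_rfl⟩, hsplit,
      hN.integral_block (by omega) (by push_cast; constructor <;> linarith [ht.1, ht.2])]
    push_cast
    ring

end IsSphereCounting

lemma average_error_sub_eq {k u t : ℝ} (hu : u ^ 2 = t + 1 / 4) (ht : t ≠ 0) :
    (1 / t) * ((k ^ 2 * (2 * t + 1 - k ^ 2) - t ^ 2) / 2) - 1 / 3 - (1 / 6 - 2 * (u - k) ^ 2) =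
      ((u - k) ^ 2 - 1 / 4) * (4 * k * (u - k) + 3 * ((u - k) ^ 2 - 1 / 4)) / (2 * t) := by
  field_simp
  linear_combination (288 * t + 2304 * k * u - 1728 * k ^ 2 - 864 * u ^ 2 + 216) * hu

lemma abs_average_error_sub_le {k u t : ℝ} (hk : 1 ≤ k) (huk : |u - k| ≤ 1 / 2)
    (hu : u ^ 2 = t + 1 / 4) (ht : 0 < t) :
    |(1 / t) * ((k ^ 2 * (2 * t + 1 - k ^ 2) - t ^ 2) / 2) - 1 / 3 - (1 / 6 - 2 * (u - k) ^ 2)| ≤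
      k / (2 * t) := by
  rw [average_error_sub_eq hu ht.ne', abs_div, abs_of_pos (by positivity : 0 < 2 * t)]
  gcongr
  have hsq : |(u - k) ^ 2 - 1 / 4| ≤ 1 / 4 := by
    rw [abs_le]; constructor <;> nlinarith [abs_le.1 huk, sq_nonneg (u - k)]
  have hlin : |4 * k * (u - k) + 3 * ((u - k) ^ 2 - 1 / 4)| ≤ 2 * k + 3 / 4 := by
    calc _ ≤ |4 * k * (u - k)| + |3 * ((u - k) ^ 2 - 1 / 4)| := abs_add_le _ _
      _ = 4 * k * |u - k| + 3 * |(u - k) ^ 2 - 1 / 4| := by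
        rw [abs_mul, abs_mul, abs_mul, abs_of_pos (by linarith : (0 : ℝ) < k)]; norm_num
      _ ≤ 4 * k * (1 / 2) + 3 * (1 / 4) := by gcongr
      _ = 2 * k + 3 / 4 := by ring
  calc _ = |(u - k) ^ 2 - 1 / 4| * |4 * k * (u - k) + 3 * ((u - k) ^ 2 - 1 / 4)| := abs_mul _ _
    _ ≤ 1 / 4 * (2 * k + 3 / 4) := by gcongr
    _ ≤ k := by linarith

/-- The function `g(x) = 1/6 − 2(x − ⌊x + 1/2⌋)²` is continuous, periodic of period 1
and has mean value zero, and the average error for the sphere satisfies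
`A(t) = g(√(t + 1/4)) + O(t^{-1/2})`. -/
theorem sphere_average_error_asymptotics (g : ℝ → ℝ)
    (hg : ∀ x : ℝ, g x = 1 / 6 - 2 * (x - (⌊x + 1 / 2⌋ : ℝ)) ^ 2)
    (N : ℝ → ℝ)
    (hN : ∀ k : ℕ, 1 ≤ k → ∀ s : ℝ,
      (k : ℝ) ^ 2 - k ≤ s → s < (k : ℝ) ^ 2 + k → N s = (k : ℝ) ^ 2) :
    Continuous g ∧ (∀ x : ℝ, g (x + 1) = g x) ∧ (∫ x in (0:ℝ)..1, g x) = 0 ∧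
    ∃ C : ℝ, ∀ t : ℝ, 1 ≤ t →
      |((1 / t) * (∫ s in (0:ℝ)..t, (N s - s)) - 1 / 3) - g (Real.sqrt (t + 1 / 4))| ≤
        C * t ^ (-(1/2) : ℝ) := by
  obtain rfl : g = sphereOscillation :=
    funext fun x => by rw [hg, sphereOscillation_eq, round_eq]
  refine ⟨continuous_sphereOscillation, periodic_sphereOscillation,
    integral_sphereOscillation, 1, fun t ht => ?_⟩
  have ht0 : 0 < t := by linarith
  have hN : IsSphereCounting N := hN
  have hint : ∫ s in (0 : ℝ)..t, (N s - s) =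
      ((sphereIndex t : ℝ) ^ 2 * (2 * t + 1 - (sphereIndex t : ℝ) ^ 2) - t ^ 2) / 2 := by
    rw [intervalIntegral.integral_sub (hN.intervalIntegrable le_rfl ht0.le)
        intervalIntegral.intervalIntegrable_id,
      hN.integral_zero_eq _ (Ico_subset_Icc_self (sphereIndex_mem_Ico ht0.le)), integral_id]
    ring
  rw [hint, sphereOscillation_eq, ← sphereIndex_eq_round]
  calc _ ≤ (sphereIndex t : ℝ) / (2 * t) :=
        abs_average_error_sub_le (by exact_mod_cast one_le_sphereIndex ht0.le)
          (by rw [sphereIndex_eq_round]; exact abs_sub_round _) (sq_sqrt (by linarith)) ht0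
    _ ≤ 2 * √t / (2 * t) := by gcongr; exact sphereIndex_le_two_mul_sqrt ht
    _ = 1 * t ^ (-(1 / 2) : ℝ) := by
      rw [rpow_neg ht0.le, ← sqrt_eq_rpow]
      field_simp
      rw [sq_sqrt ht0.le]
end

section
/- Let N(s) = k² for k² − k ≤ s < k² + k and A(t) = (1/t)∫₀ᵗ (N(s) − s)ds − 1/3. For t > 0, set r = √(t + 1/4) − ⌊√(t + 1/4) + 1/2⌋. Then exactly A(t) = (1/6 − 2r²) − (r(1 − 4r²)/2) · √(t + 1/4)/t + ((4r² + 3)(1 − 4r²))/(32 t). -/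
/-!
`N` is the constant `k²` on the cluster `[k² - k, k² + k)`, so `∫₀^{k² + k} N = ∑_{j ≤ k} 2j · j² =
k²(k + 1)²/2`, and for `t` in the cluster of `m = k + 1` the integral grows linearly with slope `m²`
from there. The rounding `m = ⌊√(t + 1/4) + 1/2⌋` is exactly the index of the cluster containing `t`,
and substituting `t = (m + r)² - 1/4` turns the average error into an identity in `m` and `r` in which
every power of `m` is absorbed into `√(t + 1/4) = m + r` and `t`.
-/

open Real MeasureTheory Set

theorem intervalIntegral.integral_eq_mul_of_eqOn_Ioo {f : ℝ → ℝ} {a b c : ℝ} (hab : a ≤ b)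
    (hf : EqOn f (fun _ ↦ c) (Ioo a b)) : ∫ s in a..b, f s = c * (b - a) := by
  rw [intervalIntegral.integral_congr_Ioo_of_le hab hf, intervalIntegral.integral_const,
    smul_eq_mul, mul_comm]

theorem intervalIntegrable_of_eqOn_Ioo {f : ℝ → ℝ} {a b c : ℝ} (hab : a ≤ b)
    (hf : EqOn f (fun _ ↦ c) (Ioo a b)) : IntervalIntegrable f volume a b :=
  intervalIntegrable_const.congr_uIoo (uIoo_of_le hab ▸ hf.symm)

theorem exists_nat_floor_sqrt_add_quarter_add_half {t : ℝ} (ht : 0 ≤ t) :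
    ∃ k : ℕ, ⌊√(t + 1 / 4) + 1 / 2⌋ = (k : ℤ) + 1 ∧
      (k : ℝ) ^ 2 + k ≤ t ∧ t < ((k : ℝ) + 1) ^ 2 + (k + 1) := by
  set x := √(t + 1 / 4)
  have hx2 : x ^ 2 = t + 1 / 4 := sq_sqrt (by linarith)
  have hx : 1 / 2 ≤ x := by nlinarith [sqrt_nonneg (t + 1 / 4)]
  have hfloor : 1 ≤ ⌊x + 1 / 2⌋ := by rw [Int.le_floor]; push_cast; linarith
  lift ⌊x + 1 / 2⌋ - 1 to ℕ using (by omega) with k hk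
  have hk' : ⌊x + 1 / 2⌋ = (k : ℤ) + 1 := by omega
  have hlo : (k : ℝ) + 1 ≤ x + 1 / 2 := by exact_mod_cast hk' ▸ Int.floor_le (x + 1 / 2)
  have hhi : x + 1 / 2 < (k : ℝ) + 2 := by
    have := Int.lt_floor_add_one (x + 1 / 2); rw [hk'] at this; push_cast at this; linarith
  refine ⟨k, hk', ?_, ?_⟩ <;> nlinarith [Nat.cast_nonneg (α := ℝ) k]

section Sphere

variable (N : ℝ → ℝ) (hN : ∀ k : ℕ, 1 ≤ k → ∀ s : ℝ,
  (k : ℝ) ^ 2 - k ≤ s → s < (k : ℝ) ^ 2 + k → N s = (k : ℝ) ^ 2)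
include hN

theorem eqOn_Ioo_of_subset_cluster {k : ℕ} (hk : 1 ≤ k) {a b : ℝ} (ha : (k : ℝ) ^ 2 - k ≤ a)
    (hb : b ≤ (k : ℝ) ^ 2 + k) : EqOn N (fun _ ↦ (k : ℝ) ^ 2) (Ioo a b) :=
  fun s hs ↦ hN k hk s (ha.trans hs.1.le) (hs.2.trans_le hb)

theorem intervalIntegrable_and_integral_zero_sq_add_self (k : ℕ) :
    IntervalIntegrable N volume 0 ((k : ℝ) ^ 2 + k) ∧
      ∫ s in (0 : ℝ)..(k : ℝ) ^ 2 + k, N s = (k : ℝ) ^ 2 * ((k : ℝ) + 1) ^ 2 / 2 := by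
  induction k with
  | zero => simp
  | succ k ih =>
    have hab : (k : ℝ) ^ 2 + k ≤ ((k + 1 : ℕ) : ℝ) ^ 2 + (k + 1 : ℕ) := by
      push_cast; nlinarith [Nat.cast_nonneg (α := ℝ) k]
    have hf := eqOn_Ioo_of_subset_cluster N hN (Nat.le_add_left 1 k) (a := (k : ℝ) ^ 2 + k)
      (le_of_eq (by push_cast; ring)) le_rfl
    have hint := intervalIntegrable_of_eqOn_Ioo hab hf
    refine ⟨ih.1.trans hint, ?_⟩
    rw [← intervalIntegral.integral_add_adjacent_intervals ih.1 hint, ih.2,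
      intervalIntegral.integral_eq_mul_of_eqOn_Ioo hab hf]
    push_cast
    ring

theorem integral_sub_id_of_mem_cluster {k : ℕ} {t : ℝ} (hlo : (k : ℝ) ^ 2 + k ≤ t)
    (hhi : t ≤ ((k : ℝ) + 1) ^ 2 + (k + 1)) :
    ∫ s in (0 : ℝ)..t, (N s - s) =
      (k : ℝ) ^ 2 * ((k : ℝ) + 1) ^ 2 / 2 + ((k : ℝ) + 1) ^ 2 * (t - ((k : ℝ) ^ 2 + k)) - t ^ 2 / 2 := by
  have hf := eqOn_Ioo_of_subset_cluster N hN (Nat.le_add_left 1 k) (a := (k : ℝ) ^ 2 + k)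
    (le_of_eq (by push_cast; ring)) (by exact_mod_cast hhi)
  have hint := intervalIntegrable_of_eqOn_Ioo hlo hf
  have hprefix := intervalIntegrable_and_integral_zero_sq_add_self N hN k
  rw [intervalIntegral.integral_sub (hprefix.1.trans hint) intervalIntegral.intervalIntegrable_id,
    ← intervalIntegral.integral_add_adjacent_intervals hprefix.1 hint, hprefix.2,
    intervalIntegral.integral_eq_mul_of_eqOn_Ioo hlo hf, integral_id]
  push_cast
  ring

end Sphere

theorem average_error_eq_of_eq_sq_sub_quarter {m r t : ℝ} (ht : t ≠ 0)
    (htr : t = (m + r) ^ 2 - 1 / 4) :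
    (1 / t) * ((m - 1) ^ 2 * m ^ 2 / 2 + m ^ 2 * (t - ((m - 1) ^ 2 + (m - 1))) - t ^ 2 / 2) - 1 / 3 =
      (1 / 6 - 2 * r ^ 2) - (r * (1 - 4 * r ^ 2) / 2) * ((m + r) / t)
        + ((4 * r ^ 2 + 3) * (1 - 4 * r ^ 2)) / (32 * t) := by
  field_simp
  rw [htr]
  ring

/-- Exact three-term expansion of the average error `A(t)` for the sphere in terms of
`r = √(t + 1/4) − ⌊√(t + 1/4) + 1/2⌋`. -/
theorem sphere_average_error_three_terms (N : ℝ → ℝ)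
    (hN : ∀ k : ℕ, 1 ≤ k → ∀ s : ℝ,
      (k : ℝ) ^ 2 - k ≤ s → s < (k : ℝ) ^ 2 + k → N s = (k : ℝ) ^ 2)
    (t : ℝ) (ht : 0 < t) (r : ℝ)
    (hr : r = Real.sqrt (t + 1 / 4) - (⌊Real.sqrt (t + 1 / 4) + 1 / 2⌋ : ℝ)) :
    (1 / t) * (∫ s in (0:ℝ)..t, (N s - s)) - 1 / 3 =
      (1 / 6 - 2 * r ^ 2)
        - (r * (1 - 4 * r ^ 2) / 2) * (Real.sqrt (t + 1 / 4) / t)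
        + ((4 * r ^ 2 + 3) * (1 - 4 * r ^ 2)) / (32 * t) := by
  obtain ⟨k, hfloor, hlo, hhi⟩ := exists_nat_floor_sqrt_add_quarter_add_half ht.le
  have hsqrt : √(t + 1 / 4) = ((k : ℝ) + 1) + r := by rw [hr, hfloor]; push_cast; ring
  have htr : t = (((k : ℝ) + 1) + r) ^ 2 - 1 / 4 := by
    rw [← hsqrt, sq_sqrt (by linarith)]; ring
  rw [integral_sub_id_of_mem_cluster N hN hlo hhi.le, hsqrt,
    ← average_error_eq_of_eq_sq_sub_quarter ht.ne' htr]
  ring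
end

section
/- Let m ≥ 1 be an integer. For s ≥ 0 let k(s) = ⌊√(s + 1/4) + 1/2⌋ and p(s) = k(s) mod m. Then there is a constant C such that for all t ≥ 1, |(1/t) ∫₀ᵗ ( p(s)(m − p(s))/(2m) − (1/12)(m − 1/m) ) ds| ≤ C t^{−1/2}. -/
open Real MeasureTheory Finset Function Interval

/-! Write the integrand as `a (k s)` with `a z = p (m - p) / (2m) - (m - 1/m) / 12`, `p = z % m`.
Since `k s = K` exactly on the block `[K² - K, K² + K)` of length `2K`, the integral up to `t` is
`2 ∑_{j < K} j a(j) + O(K)` with `K = k t ≤ 2 √t`. The function `a` is `m`-periodic and,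
by the choice of the constant `(m - 1/m) / 12`, sums to zero over a period; so its partial sums
are bounded and Abel summation gives `∑_{j < K} j a(j) = O(K)`. -/

section PeriodicSums

variable {M : Type*} [AddCommMonoid M] {a : ℕ → M} {m : ℕ}

theorem Function.Periodic.sum_range_eq_sum_range_mod (ha : Periodic a m)
    (h0 : ∑ j ∈ range m, a j = 0) (n : ℕ) :
    ∑ k ∈ range n, a k = ∑ k ∈ range (n % m), a k := by
  have key : ∀ q r, ∑ k ∈ range (m * q + r), a k = ∑ k ∈ range r, a k := by
    intro q r
    induction q with
    | zero => simp
    | succ q ih =>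
      rw [show m * (q + 1) + r = m + (m * q + r) by ring, sum_range_add, h0, zero_add]
      simpa only [add_comm m, ha _] using ih
  rw [← key (n / m) (n % m), Nat.div_add_mod]

end PeriodicSums

theorem Function.Periodic.abs_sum_range_le {a : ℕ → ℝ} {m : ℕ} (ha : Periodic a m)
    (h0 : ∑ j ∈ range m, a j = 0) (hm : 0 < m) {A : ℝ} (hA : ∀ k, |a k| ≤ A) (n : ℕ) :
    |∑ k ∈ range n, a k| ≤ m * A := by
  rw [ha.sum_range_eq_sum_range_mod h0]
  calc |∑ k ∈ range (n % m), a k| ≤ ∑ k ∈ range (n % m), |a k| := abs_sum_le_sum_abs _ _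
    _ ≤ ∑ _k ∈ range (n % m), A := sum_le_sum fun k _ ↦ hA k
    _ = (n % m : ℕ) * A := by simp
    _ ≤ m * A := by
      gcongr
      · exact (abs_nonneg _).trans (hA 0)
      · exact (Nat.mod_lt n hm).le

theorem sum_range_natCast_mul_eq (a : ℕ → ℝ) (n : ℕ) :
    ∑ k ∈ range n, (k : ℝ) * a k
      = ∑ k ∈ range n, (∑ i ∈ range n, a i - ∑ i ∈ range (k + 1), a i) := by
  induction n with
  | zero => simp
  | succ n ih =>
    simp only [sum_range_succ _ n, ih, sum_sub_distrib, sum_const, card_range, nsmul_eq_mul]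
    ring

theorem abs_sum_range_natCast_mul_le {a : ℕ → ℝ} {B : ℝ}
    (hB : ∀ n, |∑ k ∈ range n, a k| ≤ B) (n : ℕ) :
    |∑ k ∈ range n, (k : ℝ) * a k| ≤ 2 * n * B := by
  rw [sum_range_natCast_mul_eq]
  calc _ ≤ ∑ k ∈ range n, |∑ i ∈ range n, a i - ∑ i ∈ range (k + 1), a i| :=
        abs_sum_le_sum_abs _ _
    _ ≤ ∑ _k ∈ range n, 2 * B :=
        sum_le_sum fun k _ ↦ (abs_sub _ _).trans (by linarith [hB n, hB (k + 1)])
    _ = 2 * n * B := by simp; ring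

noncomputable def blockIndex (s : ℝ) : ℤ := ⌊√(s + 1 / 4) + 1 / 2⌋

theorem blockIndex_eq {K : ℕ} {s : ℝ} (h₁ : (K : ℝ) ^ 2 - K ≤ s)
    (h₂ : s < (K : ℝ) ^ 2 + K) : blockIndex s = K := by
  have hK : (0 : ℝ) ≤ K := K.cast_nonneg
  have hlo : (K : ℝ) - 1 / 2 ≤ √(s + 1 / 4) :=
    (le_abs_self _).trans (abs_le_sqrt (by nlinarith))
  have hhi : √(s + 1 / 4) < K + 1 / 2 := (sqrt_lt' (by linarith)).2 (by nlinarith)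
  rw [blockIndex, Int.floor_eq_iff]
  push_cast
  constructor <;> linarith

theorem exists_nat_sq_sub_self_le_lt_sq_add_self {s : ℝ} (hs : 0 ≤ s) :
    ∃ K : ℕ, 1 ≤ K ∧ (K : ℝ) ^ 2 - K ≤ s ∧ s < (K : ℝ) ^ 2 + K := by
  set u := √(s + 1 / 4)
  have hu2 : u ^ 2 = s + 1 / 4 := sq_sqrt (by linarith)
  have hu : 1 / 2 ≤ u := by nlinarith [sqrt_nonneg (s + 1 / 4)]
  obtain ⟨K, hK⟩ : ∃ K : ℕ, ⌊u + 1 / 2⌋ = K :=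
    Int.eq_ofNat_of_zero_le (Int.floor_nonneg.2 (by linarith))
  obtain ⟨hlo, hhi⟩ := Int.floor_eq_iff.1 hK
  push_cast at hlo hhi
  have hK1 : 0 < K := by exact_mod_cast (show (0 : ℝ) < K by linarith)
  exact ⟨K, hK1, by nlinarith, by nlinarith⟩

theorem measurable_blockIndex : Measurable blockIndex :=
  (measurable_id.add_const _).sqrt.add_const _ |>.floor

section BlockIndexIntegral

open intervalIntegral

variable {a : ℤ → ℝ} {A B : ℝ}

theorem intervalIntegrable_comp_blockIndex (hA : ∀ z, |a z| ≤ A) (x y : ℝ) :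
    IntervalIntegrable (fun s ↦ a (blockIndex s)) volume x y :=
  (intervalIntegrable_const (c := A)).mono_fun'
    (measurable_from_top.comp measurable_blockIndex).aestronglyMeasurable
    (ae_of_all _ fun _ ↦ hA _)

theorem integral_comp_blockIndex_of_le {K : ℕ} {t : ℝ} (h₁ : (K : ℝ) ^ 2 - K ≤ t)
    (h₂ : t ≤ (K : ℝ) ^ 2 + K) :
    ∫ s in ((K : ℝ) ^ 2 - K)..t, a (blockIndex s) = (t - ((K : ℝ) ^ 2 - K)) * a K := by
  have h : ∀ᵐ s, s ∈ Ι ((K : ℝ) ^ 2 - K) t → a (blockIndex s) = a K := by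
    filter_upwards [Measure.ae_ne volume ((K : ℝ) ^ 2 + K)] with s hs hmem
    rw [Set.uIoc_of_le h₁] at hmem
    rw [blockIndex_eq hmem.1.le (lt_of_le_of_ne (hmem.2.trans h₂) hs)]
  rw [integral_congr_ae h, intervalIntegral.integral_const, smul_eq_mul]

theorem integral_comp_blockIndex_sq_sub (hA : ∀ z, |a z| ≤ A) (K : ℕ) :
    ∫ s in (0 : ℝ)..((K : ℝ) ^ 2 - K), a (blockIndex s)
      = 2 * ∑ k ∈ range K, (k : ℝ) * a k := by
  induction K with
  | zero => simp
  | succ K ih =>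
    have hK : (K : ℝ) ^ 2 - K ≤ (K : ℝ) ^ 2 + K := by linarith [K.cast_nonneg (α := ℝ)]
    rw [show ((K + 1 : ℕ) : ℝ) ^ 2 - (K + 1 : ℕ) = (K : ℝ) ^ 2 + K by push_cast; ring,
      ← integral_add_adjacent_intervals (intervalIntegrable_comp_blockIndex hA _ _)
        (intervalIntegrable_comp_blockIndex hA _ _),
      ih, integral_comp_blockIndex_of_le hK le_rfl, sum_range_succ]
    ring

theorem integral_comp_blockIndex_eq (hA : ∀ z, |a z| ≤ A) {K : ℕ} {t : ℝ}
    (h₁ : (K : ℝ) ^ 2 - K ≤ t) (h₂ : t ≤ (K : ℝ) ^ 2 + K) :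
    ∫ s in (0 : ℝ)..t, a (blockIndex s)
      = 2 * ∑ k ∈ range K, (k : ℝ) * a k + (t - ((K : ℝ) ^ 2 - K)) * a K := by
  rw [← integral_add_adjacent_intervals (intervalIntegrable_comp_blockIndex hA _ _)
      (intervalIntegrable_comp_blockIndex hA _ _),
    integral_comp_blockIndex_sq_sub hA, integral_comp_blockIndex_of_le h₁ h₂]

theorem abs_integral_comp_blockIndex_le (hA : ∀ z, |a z| ≤ A)
    (hB : ∀ n : ℕ, |∑ k ∈ range n, a k| ≤ B) {t : ℝ} (ht : 1 ≤ t) :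
    |∫ s in (0 : ℝ)..t, a (blockIndex s)| ≤ 2 * (2 * A + 4 * B) * √t := by
  obtain ⟨K, hK, h₁, h₂⟩ := exists_nat_sq_sub_self_le_lt_sq_add_self (zero_le_one.trans ht)
  have hsum := abs_sum_range_natCast_mul_le hB K
  have hlast : |(t - ((K : ℝ) ^ 2 - K)) * a K| ≤ 2 * K * A := by
    rw [abs_mul, abs_of_nonneg (sub_nonneg.2 h₁)]
    exact mul_le_mul (by linarith) (hA K) (abs_nonneg _) (by positivity)
  have hKt : (K : ℝ) ≤ 2 * √t := by
    have hK' : (1 : ℝ) ≤ K := by exact_mod_cast hK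
    have : (K : ℝ) - 1 ≤ √t := (le_abs_self _).trans (abs_le_sqrt (by nlinarith))
    linarith [one_le_sqrt.2 ht]
  have hA₀ : 0 ≤ A := (abs_nonneg _).trans (hA 0)
  have hB₀ : 0 ≤ B := (abs_nonneg _).trans (hB 0)
  rw [integral_comp_blockIndex_eq hA h₁ h₂.le]
  calc _ ≤ 2 * |∑ k ∈ range K, (k : ℝ) * a k| + |(t - ((K : ℝ) ^ 2 - K)) * a K| :=
        (abs_add_le _ _).trans_eq (by rw [abs_mul, abs_two])
    _ ≤ (2 * A + 4 * B) * K := by linarith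
    _ ≤ 2 * (2 * A + 4 * B) * √t := by nlinarith

end BlockIndexIntegral

noncomputable def constantTerm (m : ℕ) (z : ℤ) : ℝ :=
  ((z % (m : ℤ) : ℤ) : ℝ) * ((m : ℝ) - ((z % (m : ℤ) : ℤ) : ℝ)) / (2 * m)
    - (1 / 12) * ((m : ℝ) - 1 / m)

theorem sum_range_mul_sub (M : ℝ) (n : ℕ) :
    ∑ p ∈ range n, (p : ℝ) * (M - p) = n * (n - 1) * (3 * M - 2 * n + 1) / 6 := by
  induction n with
  | zero => simp
  | succ n ih => rw [sum_range_succ, ih]; push_cast; ring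

theorem abs_constantTerm_le {m : ℕ} (hm : 0 < m) (z : ℤ) : |constantTerm m z| ≤ m := by
  have hm' : (1 : ℝ) ≤ m := by exact_mod_cast hm
  set p : ℝ := ((z % m : ℤ) : ℝ) with hp
  have hp₀ : 0 ≤ p := by rw [hp]; exact_mod_cast Int.emod_nonneg z (by omega : (m : ℤ) ≠ 0)
  have hp₁ : p ≤ m := by
    rw [hp]; exact_mod_cast (Int.emod_lt_of_pos z (by omega : (0 : ℤ) < m)).le
  have hq₀ : 0 ≤ p * (m - p) / (2 * m) := by have := sub_nonneg.2 hp₁; positivity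
  have hq₁ : p * (m - p) / (2 * m) ≤ m / 2 := by
    rw [div_le_div_iff₀ (by positivity) two_pos]; nlinarith
  have hr₀ : 0 < 1 / (m : ℝ) := by positivity
  have hr₁ : 1 / (m : ℝ) ≤ m := (div_le_one₀ (by positivity)).2 hm' |>.trans hm'
  rw [constantTerm, abs_le]
  constructor <;> linarith

theorem periodic_constantTerm (m : ℕ) : Periodic (fun k : ℕ ↦ constantTerm m k) m := by
  intro k
  simp only [constantTerm, Nat.cast_add, Int.add_emod_right]

theorem sum_range_constantTerm {m : ℕ} (hm : 0 < m) :
    ∑ j ∈ range m, constantTerm m j = 0 := by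
  have hm' : (m : ℝ) ≠ 0 := by positivity
  have hterm : ∀ j ∈ range m,
      constantTerm m j = j * (m - j) / (2 * m) - (1 / 12) * (m - 1 / m) := by
    intro j hj
    rw [constantTerm, Int.emod_eq_of_lt (by positivity) (by exact_mod_cast mem_range.1 hj)]
    push_cast; rfl
  rw [sum_congr rfl hterm, sum_sub_distrib, ← sum_div, sum_range_mul_sub, sum_const, card_range,
    nsmul_eq_mul]
  field_simp
  ring

theorem abs_sum_range_constantTerm_le {m : ℕ} (hm : 0 < m) (n : ℕ) :
    |∑ k ∈ range n, constantTerm m k| ≤ m * m :=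
  (periodic_constantTerm m).abs_sum_range_le (sum_range_constantTerm hm) hm
    (abs_constantTerm_le hm ·) n

/-- Key averaging estimate for the lune: the average of
`p(s)(m − p(s))/(2m) − (1/12)(m − 1/m)`, where `p(s) = ⌊√(s+1/4)+1/2⌋ mod m`,
is `O(t^{-1/2})`. -/
theorem lune_constant_term_average (m : ℕ) (hm : 1 ≤ m) :
    ∃ C : ℝ, ∀ t : ℝ, 1 ≤ t →
      |(1 / t) * ∫ s in (0:ℝ)..t,
          (((⌊Real.sqrt (s + 1 / 4) + 1 / 2⌋ % (m : ℤ) : ℤ) : ℝ)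
              * ((m : ℝ) - ((⌊Real.sqrt (s + 1 / 4) + 1 / 2⌋ % (m : ℤ) : ℤ) : ℝ)) / (2 * m)
            - (1 / 12) * ((m : ℝ) - 1 / m))| ≤ C * t ^ (-(1/2) : ℝ) := by
  refine ⟨2 * (2 * m + 4 * (m * m)), fun t ht ↦ ?_⟩
  have ht₀ : 0 < t := zero_lt_one.trans_le ht
  have hI := abs_integral_comp_blockIndex_le (abs_constantTerm_le hm)
    (abs_sum_range_constantTerm_le hm) ht
  change |(1 / t) * ∫ s in (0 : ℝ)..t, constantTerm m (blockIndex s)| ≤ _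
  rw [abs_mul, abs_of_pos (one_div_pos.2 ht₀)]
  calc _ ≤ 1 / t * (2 * (2 * m + 4 * (m * m)) * √t) := by gcongr
    _ = 2 * (2 * m + 4 * (m * m)) * (√t / t) := by ring
    _ = _ := by rw [sqrt_div_self', rpow_neg ht₀.le, sqrt_eq_rpow, one_div]
end

section
/- Let m be an odd positive integer. For a nonnegative integer N, let c(N) be the number of nonnegative integers k' with mk' ≤ N and N − mk' even. Let k = mn + p with integers n ≥ 0 and 0 ≤ p ≤ m − 1. Then ∑_{N=0}^{k−1} c(N) = k²/(4m) + ((m+1)/(4m))k + p(m−p)/(4m) + (m−p)/(4m) + h(n,p), where h(n,p) = 0 if n is odd, h(n,p) = 1/4 if n is even and p is odd, and h(n,p) = −1/4 if n is even and p is even. -/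
/-!
Write `G(n, p)` (`halfLuneClosedForm`) for the right-hand side with `k = mn + p`; it makes
sense for every `p ≤ m`.
Since `m` is odd, `N - mk'` is even iff `k' ≡ N (mod 2)`, so `c(mn + p)` counts the `k' ≤ n`
of the parity of `n + p`, which is `(n + 1)/2 + h(n, p + 1) - h(n, p)`. The polynomial part of
`G` increases by exactly `(n + 1)/2` from `p` to `p + 1`, so the sum telescopes within a block
`mn ≤ N < mn + m`, and `G(n + 1, 0) = G(n, m)` carries it over to the next block.
-/

open Finset

noncomputable def halfLuneMultiplicity (m N : ℕ) : ℕ :=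
  {k' : ℕ | m * k' ≤ N ∧ Even (N - m * k')}.ncard

noncomputable def halfLuneCorrection (n p : ℕ) : ℝ :=
  if Odd n then 0 else if Odd p then 1 / 4 else -(1 / 4)

noncomputable def halfLuneClosedForm (m n p : ℕ) : ℝ :=
  ((m * n + p : ℕ) : ℝ) ^ 2 / (4 * m) + (((m : ℝ) + 1) / (4 * m)) * ((m * n + p : ℕ) : ℝ)
    + (p : ℝ) * ((m : ℝ) - p) / (4 * m) + ((m : ℝ) - p) / (4 * m) + halfLuneCorrection n p

theorem halfLuneMultiplicity_eq_count {m : ℕ} (hm : Odd m) (N : ℕ) :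
    halfLuneMultiplicity m N = (N / m + 1).count (· ≡ N [MOD 2]) := by
  rw [halfLuneMultiplicity, Nat.count_eq_card_filter_range, ← Set.ncard_coe_finset, coe_filter]
  congr 1
  ext k'
  simp only [Set.mem_ofPred_eq, mem_range]
  rw [Nat.lt_succ_iff, Nat.le_div_iff_mul_le hm.pos, Nat.ModEq, Nat.even_iff, mul_comm k' m]
  have hpar : m * k' % 2 = k' % 2 := by
    rw [Nat.mul_mod, Nat.odd_iff.mp hm, one_mul, Nat.mod_mod]
  omega

theorem halfLuneMultiplicity_mul_add {m n p : ℕ} (hm : Odd m) (hp : p < m) :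
    (halfLuneMultiplicity m (m * n + p) : ℝ) =
      (n + 1) / 2 + halfLuneCorrection n (p + 1) - halfLuneCorrection n p := by
  have hdiv : (m * n + p) / m = n := by
    rw [Nat.mul_add_div hm.pos, Nat.div_eq_of_lt hp, add_zero]
  have hmod : (m * n + p) % 2 = (n + p) % 2 := by
    rw [Nat.add_mod, Nat.mul_mod, Nat.odd_iff.mp hm, one_mul, Nat.mod_mod, ← Nat.add_mod]
  rw [halfLuneMultiplicity_eq_count hm, Nat.count_modEq_card _ two_pos, hdiv, hmod]
  rcases Nat.even_or_odd' n with ⟨a, rfl | rfl⟩ <;>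
    rcases Nat.even_or_odd' p with ⟨b, rfl | rfl⟩
  all_goals
    norm_num [halfLuneCorrection, Nat.odd_iff, Nat.mul_add_div, Nat.add_mod, add_assoc]
    ring

theorem halfLuneClosedForm_succ {m : ℕ} (hm : m ≠ 0) (n p : ℕ) :
    halfLuneClosedForm m n (p + 1) = halfLuneClosedForm m n p + (n + 1) / 2
      + halfLuneCorrection n (p + 1) - halfLuneCorrection n p := by
  simp only [halfLuneClosedForm]
  push_cast
  field_simp
  ring

theorem halfLuneCorrection_add_one_zero {m : ℕ} (hm : Odd m) (n : ℕ) :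
    halfLuneCorrection (n + 1) 0 + 1 / 4 = halfLuneCorrection n m := by
  rcases Nat.even_or_odd n with hn | hn
  · norm_num [halfLuneCorrection, hn, hn.add_one, hm, Nat.not_odd_iff_even.mpr hn]
  · norm_num [halfLuneCorrection, hn, Nat.not_odd_iff_even.mpr hn.add_one]

theorem halfLuneClosedForm_add_one_zero {m : ℕ} (hm : Odd m) (n : ℕ) :
    halfLuneClosedForm m (n + 1) 0 = halfLuneClosedForm m n m := by
  have hm0 : (m : ℝ) ≠ 0 := by exact_mod_cast hm.pos.ne'
  rw [halfLuneClosedForm, halfLuneClosedForm, ← halfLuneCorrection_add_one_zero hm,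
    show m * (n + 1) + 0 = m * n + m by ring]
  field_simp
  ring

theorem sum_halfLuneMultiplicity_mul_add {m n : ℕ} (hm : Odd m)
    (hn : ∑ N ∈ range (m * n), (halfLuneMultiplicity m N : ℝ) = halfLuneClosedForm m n 0)
    {p : ℕ} (hp : p ≤ m) :
    ∑ N ∈ range (m * n + p), (halfLuneMultiplicity m N : ℝ) = halfLuneClosedForm m n p := by
  induction p with
  | zero => exact hn
  | succ p ih =>
    rw [← add_assoc, sum_range_succ, ih (by omega), halfLuneMultiplicity_mul_add hm (by omega),
      halfLuneClosedForm_succ hm.pos.ne']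
    ring

theorem sum_halfLuneMultiplicity_mul {m : ℕ} (hm : Odd m) (n : ℕ) :
    ∑ N ∈ range (m * n), (halfLuneMultiplicity m N : ℝ) = halfLuneClosedForm m n 0 := by
  induction n with
  | zero =>
    have hm0 : (m : ℝ) ≠ 0 := by exact_mod_cast hm.pos.ne'
    norm_num [halfLuneClosedForm, halfLuneCorrection, mul_comm (4 : ℝ), ← div_div, hm0]
  | succ n ih =>
    rw [halfLuneClosedForm_add_one_zero hm, ← sum_halfLuneMultiplicity_mul_add hm ih le_rfl,
      Nat.mul_succ]

theorem half_lune_odd_m_sum_general (m : ℕ) (hodd : Odd m) (n p k : ℕ)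
    (hp : p ≤ m - 1) (hk : k = m * n + p) :
    ((∑ N ∈ Finset.range k,
        ({k' : ℕ | m * k' ≤ N ∧ Even (N - m * k')}.ncard) : ℕ) : ℝ) =
      (k : ℝ) ^ 2 / (4 * m) + (((m : ℝ) + 1) / (4 * m)) * (k : ℝ)
        + (p : ℝ) * ((m : ℝ) - p) / (4 * m) + ((m : ℝ) - p) / (4 * m)
        + (if Odd n then 0 else if Odd p then 1 / 4 else -(1 / 4)) := by
  subst hk
  rw [Nat.cast_sum]
  exact sum_halfLuneMultiplicity_mul_add hodd (sum_halfLuneMultiplicity_mul hodd n) (by omega)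

/-- Half-lune counting sum for odd `m`: with `c(N)` the number of `k'` with `mk' ≤ N` and
`N − mk'` even, and `k = mn + p`, the sum `∑_{N=0}^{k−1} c(N)` equals
`k²/(4m) + ((m+1)/(4m))k + p(m−p)/(4m) + (m−p)/(4m) + h(n,p)`. -/
theorem half_lune_odd_m_sum (m : ℕ) (hodd : Odd m) (hm : 0 < m) (n p k : ℕ)
    (hp : p ≤ m - 1) (hk : k = m * n + p) :
    ((∑ N ∈ Finset.range k,
        ({k' : ℕ | m * k' ≤ N ∧ Even (N - m * k')}.ncard) : ℕ) : ℝ) =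
      (k : ℝ) ^ 2 / (4 * m) + (((m : ℝ) + 1) / (4 * m)) * (k : ℝ)
        + (p : ℝ) * ((m : ℝ) - p) / (4 * m) + ((m : ℝ) - p) / (4 * m)
        + (if Odd n then 0 else if Odd p then 1 / 4 else -(1 / 4)) :=
  half_lune_odd_m_sum_general m hodd n p k hp hk
end
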